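/- Let t : ZMod 5 → ℤ satisfy t(k) = Σ_{i ∈ ZMod 5} t(2i − k)·t(i) for every k ∈ ZMod 5, together with t(0) + t(1) + t(2) + t(3) + t(4) = 1. Then t(1)·t(2) = 3·t(4) − 3·t(4)², t(1)·t(3) = t(1)² − t(1), and t(1)·t(4) = t(4) − t(4)². -/

import Mathlib

/-!
View `e = ∑ t(i) x_i` in the group ring `ℤ[ZMod 5]` and let `σ` be the ring automorphism induced
by `i ↦ 2i`. Since `x_i ◃ x_j = x_{2j-i}`, idempotency in `ℤ[Q₅]` reads `e = ē · σ(e)`, and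
`ē = σ²(e)` because `4 = -1` in `ZMod 5`. Applying powers of `σ` to this equation gives
`e² = σ(e)`, hence `ē = e⁴` and `e = e⁶`, so `e ē = e⁵` is a symmetric idempotent. The coefficient
of `0` in a symmetric idempotent `ε` is `∑ ε(i)² ≥ ε(0)²`, so it is at most `1`; for `e ē` it is
`∑ t(i)²`. Together with `∑ t(i) = 1` this forces `t` to be a point mass, at which the three
relations hold trivially.
-/

open AddMonoidAlgebra

section IterateEquation

variable {M F : Type*} [CommMonoid M] [FunLike F M M] [MonoidHomClass F M M]

theorem sq_eq_map_of_eq_map_map_mul_map {σ : F} (hσ : ∀ x, σ (σ (σ (σ x))) = x) {e : M}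
    (he : e = σ (σ e) * σ e) : e ^ 2 = σ e := by
  have h1 : σ e = σ (σ (σ e)) * σ (σ e) := by simpa only [map_mul] using congrArg σ he
  have h3 : σ (σ (σ e)) = σ e * e := by
    simpa only [map_mul, hσ] using congrArg (fun x ↦ σ (σ (σ x))) he
  calc e ^ 2 = e * (σ (σ e) * σ e) := by rw [sq, ← he]
    _ = (σ e * e) * σ (σ e) := by ac_rfl
    _ = σ e := by rw [← h3, ← h1]

theorem isIdempotentElem_mul_map_map {σ : F} (hσ : ∀ x, σ (σ (σ (σ x))) = x) {e : M}
    (he : e = σ (σ e) * σ e) : IsIdempotentElem (e * σ (σ e)) := by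
  have h2 := sq_eq_map_of_eq_map_map_mul_map hσ he
  have h4 : σ (σ e) = e ^ 4 := by rw [← h2, map_pow, ← h2, ← pow_mul]
  have h6 : e ^ 6 = e := by
    calc e ^ 6 = e ^ 4 * e ^ 2 := by rw [← pow_add]
      _ = e := by rw [← h4, h2, ← he]
  rw [h4, IsIdempotentElem]
  calc e * e ^ 4 * (e * e ^ 4) = e ^ 6 * e ^ 4 := by rw [← pow_succ', ← pow_add, ← pow_add]
    _ = e * e ^ 4 := by rw [h6]

end IterateEquation

section GroupRing

variable {k G : Type*} [CommRing k] [AddCommGroup G] [Fintype G]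

theorem AddMonoidAlgebra.coeff_mul_eq_sum (x y : k[G]) (g : G) :
    (x * y).coeff g = ∑ h, x.coeff h * y.coeff (g - h) := by
  rw [coeff_mul_apply_left, Finsupp.sum_fintype _ _ (by simp)]
  simp [sub_eq_neg_add]

theorem AddMonoidAlgebra.coeff_zero_le_one_of_isIdempotentElem [LinearOrder k]
    [IsStrictOrderedRing k] {x : k[G]} (hx : IsIdempotentElem x)
    (hsymm : ∀ g, x.coeff (-g) = x.coeff g) : x.coeff 0 ≤ 1 := by
  have hsq : x.coeff 0 = ∑ h, x.coeff h ^ 2 := by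
    conv_lhs => rw [← hx.eq, coeff_mul_eq_sum]
    simp [hsymm, sq]
  have : x.coeff 0 ^ 2 ≤ x.coeff 0 := by
    conv_rhs => rw [hsq]
    exact Finset.single_le_sum (f := fun h ↦ x.coeff h ^ 2) (fun h _ ↦ sq_nonneg _)
      (Finset.mem_univ 0)
  nlinarith

end GroupRing

theorem exists_eq_pi_single_of_sum_eq_one_of_sum_sq_le_one {ι : Type*} [Fintype ι]
    [DecidableEq ι] {t : ι → ℤ} (hsum : ∑ i, t i = 1) (hsq : ∑ i, t i ^ 2 ≤ 1) :
    ∃ a, t = Pi.single a 1 := by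
  have hnonneg : ∀ i ∈ Finset.univ, 0 ≤ t i ^ 2 - t i := fun i _ ↦ by
    rcases le_or_gt (t i) 0 with h | h <;> nlinarith
  have hsq_sub : ∑ i, (t i ^ 2 - t i) = 0 := by
    have := Finset.sum_nonneg hnonneg
    rw [Finset.sum_sub_distrib] at this ⊢
    linarith
  have h01 : ∀ i, t i = 0 ∨ t i = 1 := fun i ↦ by
    have : t i * (t i - 1) = 0 := by
      linear_combination (Finset.sum_eq_zero_iff_of_nonneg hnonneg).1 hsq_sub i (Finset.mem_univ i)
    simpa [sub_eq_zero] using this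
  obtain ⟨a, -, ha⟩ := Finset.exists_ne_zero_of_sum_ne_zero (hsum.trans_ne one_ne_zero)
  refine ⟨a, funext fun b ↦ ?_⟩
  rcases eq_or_ne b a with rfl | hb
  · simp [(h01 b).resolve_left ha]
  · have hrest : ∑ i ∈ Finset.univ.erase a, t i = 0 := by
      have := Finset.add_sum_erase Finset.univ t (Finset.mem_univ a)
      linarith [(h01 a).resolve_left ha]
    have hnonneg' : ∀ i ∈ Finset.univ.erase a, 0 ≤ t i := fun i _ ↦ by
      rcases h01 i with h | h <;> simp [h]
    have hb' : b ∈ Finset.univ.erase a := Finset.mem_erase.2 ⟨hb, Finset.mem_univ b⟩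
    simpa [hb] using (Finset.sum_eq_zero_iff_of_nonneg hnonneg').1 hrest b hb'

namespace DihedralQuandle

def doubleAddEquiv : ZMod 5 ≃+ ZMod 5 where
  toFun x := 2 * x
  invFun x := 3 * x
  left_inv := by decide
  right_inv := by decide
  map_add' := mul_add 2

variable {k : Type*} [CommRing k]

variable (k) in
noncomputable def doubling : k[ZMod 5] ≃+* k[ZMod 5] :=
  mapDomainRingEquiv k doubleAddEquiv

theorem coeff_doubling (x : k[ZMod 5]) (g : ZMod 5) :
    (doubling k x).coeff g = x.coeff (3 * g) := by
  simp [doubling, doubleAddEquiv]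

theorem coeff_doubling_doubling (x : k[ZMod 5]) (g : ZMod 5) :
    (doubling k (doubling k x)).coeff g = x.coeff (-g) := by
  rw [coeff_doubling, coeff_doubling]
  congr 1
  revert g; decide

theorem doubling_doubling_doubling_doubling (x : k[ZMod 5]) :
    doubling k (doubling k (doubling k (doubling k x))) = x := by
  ext g
  simp [coeff_doubling_doubling]

theorem eq_doubling_doubling_mul_doubling {e : k[ZMod 5]}
    (he : ∀ g, e.coeff g = ∑ i, e.coeff (2 * i - g) * e.coeff i) :
    e = doubling k (doubling k e) * doubling k e := by
  ext g
  rw [mul_comm, coeff_mul_eq_sum, ← doubleAddEquiv.toEquiv.sum_comp, he g]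
  refine Finset.sum_congr rfl fun i _ ↦ ?_
  rw [coeff_doubling, coeff_doubling_doubling, neg_sub, mul_comm]
  congr 2
  exact (doubleAddEquiv.symm_apply_apply i).symm

theorem sum_coeff_sq_le_one [LinearOrder k] [IsStrictOrderedRing k] {e : k[ZMod 5]}
    (he : ∀ g, e.coeff g = ∑ i, e.coeff (2 * i - g) * e.coeff i) :
    ∑ g, e.coeff g ^ 2 ≤ 1 := by
  set ε := e * doubling k (doubling k e)
  have hε : IsIdempotentElem ε := isIdempotentElem_mul_map_map
    doubling_doubling_doubling_doubling (eq_doubling_doubling_mul_doubling he)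
  have hsymm : ∀ g, ε.coeff (-g) = ε.coeff g := fun g ↦ by
    rw [← coeff_doubling_doubling, map_mul, map_mul, doubling_doubling_doubling_doubling, mul_comm]
  calc ∑ g, e.coeff g ^ 2 = ε.coeff 0 := by simp [ε, coeff_mul_eq_sum, coeff_doubling_doubling, sq]
    _ ≤ 1 := coeff_zero_le_one_of_isIdempotentElem hε hsymm

end DihedralQuandle

/-- Gröbner-basis relations for idempotents of `ℤ[Q₅]`:
`t(1)·t(2) = 3·t(4) − 3·t(4)²`, `t(1)·t(3) = t(1)² − t(1)`, `t(1)·t(4) = t(4) − t(4)²`. -/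
theorem stmt_9 (t : ZMod 5 → ℤ)
    (hidem : ∀ k : ZMod 5, t k = ∑ i : ZMod 5, t (2 * i - k) * t i)
    (hsum : t 0 + t 1 + t 2 + t 3 + t 4 = 1) :
    t 1 * t 2 = 3 * t 4 - 3 * t 4 ^ 2 ∧
    t 1 * t 3 = t 1 ^ 2 - t 1 ∧
    t 1 * t 4 = t 4 - t 4 ^ 2 := by
  let e : ℤ[ZMod 5] := ofCoeff (Finsupp.equivFunOnFinite.symm t)
  have hsq : ∑ i, t i ^ 2 ≤ 1 :=
    DihedralQuandle.sum_coeff_sq_le_one (e := e) (by simpa [e] using hidem)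
  have hsum' : ∑ i, t i = 1 := by rw [← hsum]; exact Fin.sum_univ_five t
  obtain ⟨a, rfl⟩ := exists_eq_pi_single_of_sum_eq_one_of_sum_sq_le_one hsum' hsq
  revert a
  decide
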